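/- Let q ≥ 3 be an integer and let β_s = β_s(q). Then the function s ↦ D_{β_s}(s) has exactly one zero s* in the interval (1/q, 1]; moreover (d/ds) D_{β_s}(s)|_{s=s*} = 0 and (d²/ds²) D_{β_s}(s)|_{s=s*} < 0. -/

import Mathlib

/-!
For `x ∈ (1/q, 1)`, `D_β(x) = 0` exactly when `β = zeroBeta q x`, where
`zeroBeta q x = (q-1) log((q-1)x/(1-x)) / (2(qx-1))`, so `β_s` is the minimum of `zeroBeta q`
on `(1/q, 1)`. The derivative of `zeroBeta q` has the sign of
`ψ(x) = (qx-1)/(x(1-x)) - q log((q-1)x/(1-x))`. Since `ψ(1/q) = 0` and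
`ψ'(x) = (2x-1)(qx-1)/(x(1-x))²`, `ψ` is negative up to a unique zero `s* ∈ (1/2, 1)` and
positive after it, so `zeroBeta q` has a strict global minimum at `s*`; it is unbounded near `1`.
Hence `β_s = zeroBeta q s*`, and `s*` is the only zero of `D_{β_s}`.

Writing `D_β(x) = -x + 1/(1 + E)`, at `(β_s, s*)` one has `E = (1-s*)/s*`, and `ψ(s*) = 0`
turns the rate `2β_s q/(q-1)` of `E` into `1/(s*(1-s*))`. This gives `D'(s*) = 0`, and
`D''(s*)` is a positive multiple of `E - 1 = (1-2s*)/s* < 0`.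
-/

/-- The drift function `D_β(x) = −x + (1 + (q−1) e^{2β(1−qx)/(q−1)})⁻¹`,
equivalently `−x + e^{2βx}/(e^{2βx} + (q−1)e^{2β(1−x)/(q−1)})`. -/
noncomputable def Dfun (q : ℕ) (β x : ℝ) : ℝ :=
  -x + (1 + ((q : ℝ) - 1) * Real.exp (2 * β * (1 - (q : ℝ) * x) / ((q : ℝ) - 1)))⁻¹

/-- The dynamical (spinodal) critical inverse temperature
`β_s(q) = sup {β ≥ 0 : D_β(x) ≠ 0 for all x ∈ (1/q,1)}`. -/
noncomputable def betaS (q : ℕ) : ℝ :=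
  sSup {β : ℝ | 0 ≤ β ∧ ∀ x ∈ Set.Ioo (1 / (q : ℝ)) 1, Dfun q β x ≠ 0}

open Real Set

noncomputable section

def logit (Q x : ℝ) : ℝ := log ((Q - 1) * x / (1 - x))

def logitInv (Q t : ℝ) : ℝ := exp t / (Q - 1 + exp t)

def zeroBeta (Q x : ℝ) : ℝ := (Q - 1) * logit Q x / (2 * (Q * x - 1))

def zeroBetaNumer (Q x : ℝ) : ℝ := (Q * x - 1) / (x * (1 - x)) - Q * logit Q x

def expTerm (Q β x : ℝ) : ℝ := (Q - 1) * exp (2 * β * (1 - Q * x) / (Q - 1))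

end

variable {Q s t x β : ℝ}

lemma one_div_lt_one_div_two (hQ : 2 < Q) : 1 / Q < 1 / 2 :=
  one_div_lt_one_div_of_lt two_pos hQ

lemma sub_one_pos_of_one_div_lt (hQ : 0 < Q) (hx : 1 / Q < x) : 0 < Q * x - 1 := by
  rw [div_lt_iff₀ hQ] at hx
  linarith

lemma pos_of_one_div_lt (hQ : 0 < Q) (hx : 1 / Q < x) : 0 < x :=
  (one_div_pos.2 hQ).trans hx

section Logit

variable (hQ : 1 < Q)
include hQ

lemma logit_logitInv (t : ℝ) : logit Q (logitInv Q t) = t := by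
  have hQ1 : 0 < Q - 1 := by linarith
  have hden : 0 < Q - 1 + exp t := by linarith [exp_pos t]
  have h : (Q - 1) * logitInv Q t / (1 - logitInv Q t) = exp t := by
    rw [logitInv, one_sub_div hden.ne', add_sub_cancel_right]
    field_simp
  rw [logit, h, log_exp]

lemma logitInv_lt_one : logitInv Q t < 1 := by
  rw [logitInv, div_lt_one (by linarith [exp_pos t])]
  linarith

lemma one_div_lt_logitInv (ht : 0 < t) : 1 / Q < logitInv Q t := by
  have := one_lt_exp_iff.2 ht
  rw [logitInv, div_lt_div_iff₀ (by linarith) (by linarith)]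
  nlinarith

lemma one_div_two_lt_logitInv (ht : Q - 1 < exp t) : 1 / 2 < logitInv Q t := by
  rw [logitInv, div_lt_div_iff₀ two_pos (by linarith [exp_pos t])]
  linarith

lemma logit_pos (hx : x ∈ Ioo (1 / Q) 1) : 0 < logit Q x := by
  have hx0 := pos_of_one_div_lt (by linarith) hx.1
  have hQx := sub_one_pos_of_one_div_lt (by linarith) hx.1
  apply log_pos
  rw [lt_div_iff₀ (by linarith [hx.2])]
  linarith

lemma hasDerivAt_logit (hx : x ∈ Ioo 0 1) : HasDerivAt (logit Q) (1 / (x * (1 - x))) x := by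
  obtain ⟨hx0, hx1⟩ := hx
  have h1x : 0 < 1 - x := by linarith
  have hQ1 : 0 < Q - 1 := by linarith
  have hfrac : HasDerivAt (fun y => (Q - 1) * y / (1 - y)) ((Q - 1) / (1 - x) ^ 2) x := by
    refine (((hasDerivAt_id' x).const_mul (Q - 1)).div ((hasDerivAt_id' x).const_sub 1)
      h1x.ne').congr_deriv ?_
    ring
  refine (hfrac.log (by positivity)).congr_deriv ?_
  field_simp

end Logit

lemma zeroBetaNumer_one_div (hQ : 1 < Q) : zeroBetaNumer Q (1 / Q) = 0 := by
  have hQ0 : Q ≠ 0 := by positivity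
  have hQ1 : Q - 1 ≠ 0 := by linarith
  have h : (Q - 1) * (1 / Q) / (1 - 1 / Q) = 1 := by field_simp
  rw [zeroBetaNumer, logit, h, log_one, mul_one_div_cancel hQ0]
  ring

lemma hasDerivAt_zeroBetaNumer (hQ : 1 < Q) (hx : x ∈ Ioo 0 1) :
    HasDerivAt (zeroBetaNumer Q) ((2 * x - 1) * (Q * x - 1) / (x * (1 - x)) ^ 2) x := by
  have hden : x * (1 - x) ≠ 0 := by nlinarith [hx.1, hx.2]
  have hprod : HasDerivAt (fun y => y * (1 - y)) (1 - 2 * x) x :=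
    ((hasDerivAt_id' x).mul ((hasDerivAt_id' x).const_sub 1)).congr_deriv (by ring)
  have hrat : HasDerivAt (fun y => (Q * y - 1) / (y * (1 - y)))
      ((Q * (x * (1 - x)) - (Q * x - 1) * (1 - 2 * x)) / (x * (1 - x)) ^ 2) x :=
    (((hasDerivAt_id' x).const_mul Q).sub_const 1).div hprod hden |>.congr_deriv (by ring)
  refine (hrat.sub ((hasDerivAt_logit hQ hx).const_mul Q)).congr_deriv ?_
  field_simp
  ring

lemma continuousOn_zeroBetaNumer (hQ : 1 < Q) : ContinuousOn (zeroBetaNumer Q) (Ioo 0 1) :=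
  fun _ hx => (hasDerivAt_zeroBetaNumer hQ hx).continuousAt.continuousWithinAt

lemma strictAntiOn_zeroBetaNumer (hQ : 1 < Q) :
    StrictAntiOn (zeroBetaNumer Q) (Icc (1 / Q) (1 / 2)) := by
  have hQ0 : 0 < Q := by linarith
  refine strictAntiOn_of_deriv_neg (convex_Icc _ _) ((continuousOn_zeroBetaNumer hQ).mono
    fun y hy => ⟨(one_div_pos.2 hQ0).trans_le hy.1, by linarith [hy.2]⟩) fun y hy => ?_
  rw [interior_Icc] at hy
  have hy0 := pos_of_one_div_lt hQ0 hy.1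
  rw [(hasDerivAt_zeroBetaNumer hQ ⟨hy0, by linarith [hy.2]⟩).deriv]
  have hQy := sub_one_pos_of_one_div_lt hQ0 hy.1
  have h2y : 2 * y - 1 < 0 := by linarith [hy.2]
  have h1y : 0 < 1 - y := by linarith [hy.2]
  exact div_neg_of_neg_of_pos (mul_neg_of_neg_of_pos h2y hQy) (by positivity)

lemma strictMonoOn_zeroBetaNumer (hQ : 2 ≤ Q) :
    StrictMonoOn (zeroBetaNumer Q) (Ico (1 / 2) 1) := by
  have hQ1 : 1 < Q := by linarith
  refine strictMonoOn_of_deriv_pos (convex_Ico _ _) ((continuousOn_zeroBetaNumer hQ1).mono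
    fun y hy => ⟨by linarith [hy.1], hy.2⟩) fun y hy => ?_
  rw [interior_Ico] at hy
  rw [(hasDerivAt_zeroBetaNumer hQ1 ⟨by linarith [hy.1], hy.2⟩).deriv]
  have hQy : 0 < Q * y - 1 := by nlinarith [hy.1]
  have h2y : 0 < 2 * y - 1 := by linarith [hy.1]
  have hy0 : 0 < y := by linarith
  have h1y : 0 < 1 - y := by linarith [hy.2]
  exact div_pos (mul_pos h2y hQy) (by positivity)

lemma zeroBetaNumer_logitInv (hQ : 1 < Q) (t : ℝ) :
    zeroBetaNumer Q (logitInv Q t) = (exp t - 1) * (Q - 1 + exp t) / exp t - Q * t := by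
  have hden : 0 < Q - 1 + exp t := by linarith [exp_pos t]
  have hQ1 : Q - 1 ≠ 0 := by linarith
  rw [zeroBetaNumer, logit_logitInv hQ, logitInv, one_sub_div hden.ne', add_sub_cancel_right]
  congr 1
  field_simp
  ring

lemma zeroBetaNumer_logitInv_pos (hQ : 1 < Q) : 0 < zeroBetaNumer Q (logitInv Q (2 * Q)) := by
  rw [zeroBetaNumer_logitInv hQ, sub_pos, lt_div_iff₀ (exp_pos _)]
  have he := quadratic_le_exp_of_nonneg (show 0 ≤ 2 * Q by linarith)
  have he0 := exp_pos (2 * Q)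
  set e := exp (2 * Q)
  have hgap : 0 < (e - 1 - Q * (2 * Q)) * e := mul_pos (by nlinarith) he0
  nlinarith [mul_nonneg (show 0 ≤ e - 1 by nlinarith) (show 0 ≤ Q - 1 by linarith)]

lemma exists_zeroBetaNumer_eq_zero (hQ : 2 < Q) : ∃ s ∈ Ioo (1 / 2) 1, zeroBetaNumer Q s = 0 := by
  have hQ1 : 1 < Q := by linarith
  set b := logitInv Q (2 * Q)
  have hb : 1 / 2 < b := one_div_two_lt_logitInv hQ1 (by linarith [add_one_le_exp (2 * Q)])
  have hb1 : b < 1 := logitInv_lt_one hQ1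
  have hneg : zeroBetaNumer Q (1 / 2) < 0 := by
    have hQ2 := one_div_lt_one_div_two hQ
    rw [← zeroBetaNumer_one_div hQ1]
    exact strictAntiOn_zeroBetaNumer hQ1 ⟨le_rfl, hQ2.le⟩ ⟨hQ2.le, le_rfl⟩ hQ2
  obtain ⟨s, hs, hψ⟩ := intermediate_value_Ioo hb.le ((continuousOn_zeroBetaNumer hQ1).mono
    fun y hy => ⟨by linarith [hy.1], by linarith [hy.2]⟩) ⟨hneg, zeroBetaNumer_logitInv_pos hQ1⟩
  exact ⟨s, ⟨hs.1, hs.2.trans hb1⟩, hψ⟩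

section ZeroOfZeroBetaNumer

variable (hs : s ∈ Ioo (1 / 2) 1) (hψ : zeroBetaNumer Q s = 0)
include hs hψ

lemma zeroBetaNumer_neg_of_lt (hQ : 2 < Q) (hx : x ∈ Ioo (1 / Q) s) : zeroBetaNumer Q x < 0 := by
  have hQ1 : 1 < Q := by linarith
  rcases le_or_gt x (1 / 2) with hx2 | hx2
  · rw [← zeroBetaNumer_one_div hQ1]
    exact strictAntiOn_zeroBetaNumer hQ1 ⟨le_rfl, (one_div_lt_one_div_two hQ).le⟩
      ⟨hx.1.le, hx2⟩ hx.1
  · rw [← hψ]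
    exact strictMonoOn_zeroBetaNumer hQ.le ⟨hx2.le, hx.2.trans hs.2⟩ ⟨hs.1.le, hs.2⟩ hx.2

lemma zeroBetaNumer_pos_of_gt (hQ : 2 ≤ Q) (hx : x ∈ Ioo s 1) : 0 < zeroBetaNumer Q x := by
  rw [← hψ]
  exact strictMonoOn_zeroBetaNumer hQ ⟨hs.1.le, hs.2⟩ ⟨hs.1.trans hx.1 |>.le, hx.2⟩ hx.1

end ZeroOfZeroBetaNumer

lemma zeroBeta_pos (hQ : 1 < Q) (hx : x ∈ Ioo (1 / Q) 1) : 0 < zeroBeta Q x := by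
  have hQx := sub_one_pos_of_one_div_lt (by linarith) hx.1
  have := logit_pos hQ hx
  have : 0 < Q - 1 := by linarith
  unfold zeroBeta
  positivity

lemma hasDerivAt_zeroBeta (hQ : 1 < Q) (hx : x ∈ Ioo (1 / Q) 1) :
    HasDerivAt (zeroBeta Q) ((Q - 1) * zeroBetaNumer Q x / (2 * (Q * x - 1) ^ 2)) x := by
  have hx0 := pos_of_one_div_lt (by linarith) hx.1
  have hQx := sub_one_pos_of_one_div_lt (by linarith) hx.1
  have h1x : 0 < 1 - x := by linarith [hx.2]
  have hden : HasDerivAt (fun y => 2 * (Q * y - 1)) (2 * Q) x :=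
    (((hasDerivAt_id' x).const_mul Q).sub_const 1).const_mul 2 |>.congr_deriv (by ring)
  refine (((hasDerivAt_logit hQ ⟨hx0, hx.2⟩).const_mul (Q - 1)).div hden
    (by positivity)).congr_deriv ?_
  rw [zeroBetaNumer]
  field_simp

lemma continuousOn_zeroBeta (hQ : 1 < Q) : ContinuousOn (zeroBeta Q) (Ioo (1 / Q) 1) :=
  fun _ hx => (hasDerivAt_zeroBeta hQ hx).continuousAt.continuousWithinAt

lemma zeroBeta_lt_of_ne (hQ : 2 < Q) (hs : s ∈ Ioo (1 / 2) 1) (hψ : zeroBetaNumer Q s = 0)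
    (hx : x ∈ Ioo (1 / Q) 1) (hxs : x ≠ s) : zeroBeta Q s < zeroBeta Q x := by
  have hQ1 : 1 < Q := by linarith
  have hQs : 1 / Q < s := (one_div_lt_one_div_two hQ).trans hs.1
  have hderiv {y : ℝ} (hy : y ∈ Ioo (1 / Q) 1) :
      deriv (zeroBeta Q) y = (Q - 1) / (2 * (Q * y - 1) ^ 2) * zeroBetaNumer Q y := by
    rw [(hasDerivAt_zeroBeta hQ1 hy).deriv]
    ring
  have hcoef {y : ℝ} (hy : y ∈ Ioo (1 / Q) 1) : 0 < (Q - 1) / (2 * (Q * y - 1) ^ 2) := by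
    have := sub_one_pos_of_one_div_lt (by linarith) hy.1
    exact div_pos (by linarith) (by positivity)
  rcases hxs.lt_or_gt with hlt | hgt
  · refine strictAntiOn_of_deriv_neg (convex_Ioc (1 / Q) s) ((continuousOn_zeroBeta hQ1).mono
      fun y hy => ⟨hy.1, hy.2.trans_lt hs.2⟩) (fun y hy => ?_) ⟨hx.1, hlt.le⟩ ⟨hQs, le_rfl⟩ hlt
    rw [interior_Ioc] at hy
    have hy' : y ∈ Ioo (1 / Q) 1 := ⟨hy.1, hy.2.trans hs.2⟩
    rw [hderiv hy']
    exact mul_neg_of_pos_of_neg (hcoef hy') (zeroBetaNumer_neg_of_lt hs hψ hQ hy)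
  · refine strictMonoOn_of_deriv_pos (convex_Ico s 1) ((continuousOn_zeroBeta hQ1).mono
      fun y hy => ⟨hQs.trans_le hy.1, hy.2⟩) (fun y hy => ?_) ⟨le_rfl, hs.2⟩ ⟨hgt.le, hx.2⟩ hgt
    rw [interior_Ico] at hy
    have hy' : y ∈ Ioo (1 / Q) 1 := ⟨hQs.trans hy.1, hy.2⟩
    rw [hderiv hy']
    exact mul_pos (hcoef hy') (zeroBetaNumer_pos_of_gt hs hψ hQ.le hy)

lemma exists_zeroBeta_eq (hQ : 1 < Q) (hs : s ∈ Ioo (1 / Q) 1) (hβ : zeroBeta Q s ≤ β) :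
    ∃ x ∈ Ioo (1 / Q) 1, zeroBeta Q x = β := by
  have hβ0 : 0 < β := (zeroBeta_pos hQ hs).trans_le hβ
  set b := logitInv Q (2 * β)
  have hb : b ∈ Ioo (1 / Q) 1 :=
    ⟨one_div_lt_logitInv hQ (by linarith), logitInv_lt_one hQ⟩
  have hQb := sub_one_pos_of_one_div_lt (by linarith) hb.1
  have hβb : β ≤ zeroBeta Q b := by
    rw [zeroBeta, logit_logitInv hQ, le_div_iff₀ (by positivity)]
    nlinarith [mul_pos hβ0 (sub_pos.2 hb.2)]
  have hsub : uIcc s b ⊆ Ioo (1 / Q) 1 := ordConnected_Ioo.uIcc_subset hs hb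
  obtain ⟨x, hx, hφ⟩ := intermediate_value_uIcc ((continuousOn_zeroBeta hQ).mono hsub)
    (mem_uIcc.2 (Or.inl ⟨hβ, hβb⟩))
  exact ⟨x, hsub hx, hφ⟩

lemma two_mul_zeroBeta_mul_div_of_zeroBetaNumer_eq_zero (hQ : 1 < Q)
    (hs : s ∈ Ioo (1 / Q) 1) (hψ : zeroBetaNumer Q s = 0) :
    2 * zeroBeta Q s * Q / (Q - 1) = 1 / (s * (1 - s)) := by
  have hs0 := pos_of_one_div_lt (by linarith) hs.1
  have hQs := sub_one_pos_of_one_div_lt (by linarith) hs.1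
  have h1s : 0 < 1 - s := by linarith [hs.2]
  have hL : Q * logit Q s = (Q * s - 1) / (s * (1 - s)) := by
    rw [zeroBetaNumer, sub_eq_zero] at hψ
    exact hψ.symm
  have hQ1 : Q - 1 ≠ 0 := by linarith
  calc 2 * zeroBeta Q s * Q / (Q - 1) = Q * logit Q s / (Q * s - 1) := by
        rw [zeroBeta]; field_simp
    _ = 1 / (s * (1 - s)) := by rw [hL]; field_simp

lemma Dfun_eq_expTerm (q : ℕ) (β x : ℝ) : Dfun q β x = -x + (1 + expTerm q β x)⁻¹ := rfl

lemma expTerm_pos (hQ : 1 < Q) : 0 < expTerm Q β x := by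
  have : 0 < Q - 1 := by linarith
  unfold expTerm
  positivity

lemma expTerm_zeroBeta (hQ : 1 < Q) (hx : x ∈ Ioo (1 / Q) 1) :
    expTerm Q (zeroBeta Q x) x = (1 - x) / x := by
  have hx0 := pos_of_one_div_lt (by linarith) hx.1
  have hQx := sub_one_pos_of_one_div_lt (by linarith) hx.1
  have h1x : 0 < 1 - x := by linarith [hx.2]
  have hQ1 : Q - 1 ≠ 0 := by linarith
  have hexp : 2 * zeroBeta Q x * (1 - Q * x) / (Q - 1) = -logit Q x := by
    rw [zeroBeta]
    field_simp
    ring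
  rw [expTerm, hexp, exp_neg, logit, exp_log (by positivity)]
  field_simp

lemma expTerm_injective (hQ : 1 < Q) (hx : Q * x ≠ 1) :
    Function.Injective fun β => expTerm Q β x := by
  intro β β' h
  have hQ1 : Q - 1 ≠ 0 := by linarith
  have h1 : 1 - Q * x ≠ 0 := sub_ne_zero.2 hx.symm
  simp only [expTerm, mul_right_inj' hQ1, exp_eq_exp] at h
  field_simp at h
  exact h

lemma Dfun_eq_zero_iff {q : ℕ} (hq : 1 < q) (hx : x ∈ Ioo (1 / (q : ℝ)) 1) :
    Dfun q β x = 0 ↔ β = zeroBeta q x := by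
  have hQ : (1 : ℝ) < q := by exact_mod_cast hq
  have hx0 := pos_of_one_div_lt (by linarith) hx.1
  have hQx := sub_one_pos_of_one_div_lt (by linarith) hx.1
  calc Dfun q β x = 0 ↔ expTerm q β x = (1 - x) / x := by
        rw [Dfun_eq_expTerm, neg_add_eq_zero, eq_comm, inv_eq_iff_eq_inv, ← eq_sub_iff_add_eq',
          sub_div, div_self hx0.ne', one_div]
    _ ↔ expTerm q β x = expTerm q (zeroBeta q x) x := by rw [expTerm_zeroBeta hQ hx]
    _ ↔ β = zeroBeta q x := (expTerm_injective hQ (by linarith)).eq_iff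

lemma Dfun_one_neg {q : ℕ} (hq : 1 < q) : Dfun q β 1 < 0 := by
  have hE := expTerm_pos (β := β) (x := 1) (show (1 : ℝ) < q by exact_mod_cast hq)
  rw [Dfun_eq_expTerm, neg_add_lt_iff_lt_add, add_zero]
  exact inv_lt_one_of_one_lt₀ (by linarith)

section DriftDerivatives

lemma hasDerivAt_expTerm (Q β x : ℝ) :
    HasDerivAt (expTerm Q β) (-(2 * β * Q / (Q - 1)) * expTerm Q β x) x := by
  have harg : HasDerivAt (fun y => 2 * β * (1 - Q * y) / (Q - 1)) (-(2 * β * Q / (Q - 1))) x :=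
    ((((hasDerivAt_id' x).const_mul Q).const_sub 1).const_mul (2 * β)).div_const (Q - 1)
      |>.congr_deriv (by ring)
  exact (harg.exp.const_mul (Q - 1)).congr_deriv (by rw [expTerm]; ring)

variable {q : ℕ}

lemma deriv_Dfun (hq : 1 < q) (β : ℝ) :
    deriv (Dfun q β) =
      fun x => -1 + 2 * β * q / (q - 1) * expTerm q β x / (1 + expTerm q β x) ^ 2 := by
  funext x
  have hE := expTerm_pos (β := β) (x := x) (show (1 : ℝ) < q by exact_mod_cast hq)
  have hinv := ((hasDerivAt_expTerm q β x).const_add 1).inv (by linarith)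
  exact ((hasDerivAt_id' x).neg.add hinv).deriv.trans (by ring)

lemma hasDerivAt_deriv_Dfun (hq : 1 < q) (β x : ℝ) :
    HasDerivAt (deriv (Dfun q β))
      ((2 * β * q / (q - 1)) ^ 2 * expTerm q β x * (expTerm q β x - 1) /
        (1 + expTerm q β x) ^ 3) x := by
  have hE := expTerm_pos (β := β) (x := x) (show (1 : ℝ) < q by exact_mod_cast hq)
  have hE' := hasDerivAt_expTerm q β x
  rw [deriv_Dfun hq]
  refine (((hE'.const_mul _).div ((hE'.const_add 1).fun_pow 2) (by positivity)).const_add (-1))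
    |>.congr_deriv ?_
  field_simp
  ring

variable (hq : 1 < q) (hs : s ∈ Ioo (1 / (q : ℝ)) 1) (hψ : zeroBetaNumer q s = 0)
include hq hs hψ

lemma deriv_Dfun_zeroBeta_eq_zero : deriv (Dfun q (zeroBeta q s)) s = 0 := by
  have hQ : (1 : ℝ) < q := by exact_mod_cast hq
  have hs0 := pos_of_one_div_lt (by linarith) hs.1
  have h1s : 0 < 1 - s := by linarith [hs.2]
  simp only [deriv_Dfun hq]
  rw [expTerm_zeroBeta hQ hs, two_mul_zeroBeta_mul_div_of_zeroBetaNumer_eq_zero hQ hs hψ]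
  field_simp
  ring

lemma deriv_deriv_Dfun_zeroBeta_neg (hs2 : 1 / 2 < s) :
    deriv (deriv (Dfun q (zeroBeta q s))) s < 0 := by
  have hQ : (1 : ℝ) < q := by exact_mod_cast hq
  have hs0 := pos_of_one_div_lt (by linarith) hs.1
  have h1s : 0 < 1 - s := by linarith [hs.2]
  rw [(hasDerivAt_deriv_Dfun hq _ s).deriv, expTerm_zeroBeta hQ hs,
    two_mul_zeroBeta_mul_div_of_zeroBetaNumer_eq_zero hQ hs hψ]
  have hE1 : (1 - s) / s - 1 < 0 := by
    rw [div_sub_one hs0.ne']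
    exact div_neg_of_neg_of_pos (by linarith) hs0
  exact div_neg_of_neg_of_pos (mul_neg_of_pos_of_neg (by positivity) hE1) (by positivity)

end DriftDerivatives

lemma betaS_eq_zeroBeta {q : ℕ} (hq : 2 < q) (hs : s ∈ Ioo (1 / 2) 1)
    (hψ : zeroBetaNumer q s = 0) : betaS q = zeroBeta q s := by
  have hQ : (2 : ℝ) < q := by exact_mod_cast hq
  have hq1 : 1 < q := by omega
  have hs' : s ∈ Ioo (1 / (q : ℝ)) 1 := ⟨(one_div_lt_one_div_two hQ).trans hs.1, hs.2⟩
  suffices h : {β : ℝ | 0 ≤ β ∧ ∀ x ∈ Ioo (1 / (q : ℝ)) 1, Dfun q β x ≠ 0} =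
      Ico 0 (zeroBeta q s) by
    rw [betaS, h, csSup_Ico (zeroBeta_pos (by linarith) hs')]
  ext β
  simp only [mem_ofPred_eq, mem_Ico, and_congr_right_iff]
  intro hβ0
  constructor
  · intro hβ
    by_contra! hle
    obtain ⟨x, hx, rfl⟩ := exists_zeroBeta_eq (by linarith) hs' hle
    exact hβ x hx ((Dfun_eq_zero_iff hq1 hx).2 rfl)
  · intro hlt x hx hD
    rw [(Dfun_eq_zero_iff hq1 hx).1 hD] at hlt
    obtain rfl | hxs := eq_or_ne x s
    · exact lt_irrefl _ hlt
    · exact (zeroBeta_lt_of_ne hQ hs hψ hx hxs).not_gt hlt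

/-- (Proposition 5.1, part 1, plus Eq. (5.3)): at `β = β_s(q)` the drift
function `D_{β_s}` has a unique zero `s*` in `(1/q,1]`; at this zero the first
derivative vanishes and the second derivative is strictly negative. -/
theorem Dfun_betaS_unique_zero (q : ℕ) (hq : 3 ≤ q) :
    ∃ s ∈ Set.Ioc (1 / (q : ℝ)) 1,
      Dfun q (betaS q) s = 0 ∧
      (∀ s' ∈ Set.Ioc (1 / (q : ℝ)) 1, Dfun q (betaS q) s' = 0 → s' = s) ∧
      deriv (fun x => Dfun q (betaS q) x) s = 0 ∧
      deriv (deriv (fun x => Dfun q (betaS q) x)) s < 0 := by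
  have hQ : (2 : ℝ) < q := by exact_mod_cast hq
  have hq1 : 1 < q := by omega
  obtain ⟨s, hs, hψ⟩ := exists_zeroBetaNumer_eq_zero hQ
  have hs' : s ∈ Ioo (1 / (q : ℝ)) 1 := ⟨(one_div_lt_one_div_two hQ).trans hs.1, hs.2⟩
  have hβ := betaS_eq_zeroBeta hq hs hψ
  refine ⟨s, Ioo_subset_Ioc_self hs', (Dfun_eq_zero_iff hq1 hs').2 hβ, ?_, ?_, ?_⟩
  · rintro x ⟨hx1, hx2⟩ hD
    obtain rfl | hx2 := hx2.eq_or_lt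
    · exact absurd hD (Dfun_one_neg hq1).ne
    · have hx : x ∈ Ioo (1 / (q : ℝ)) 1 := ⟨hx1, hx2⟩
      by_contra hxs
      exact (zeroBeta_lt_of_ne hQ hs hψ hx hxs).ne (hβ.symm.trans ((Dfun_eq_zero_iff hq1 hx).1 hD))
  · rw [hβ]
    exact deriv_Dfun_zeroBeta_eq_zero hq1 hs' hψ
  · rw [hβ]
    exact deriv_deriv_Dfun_zeroBeta_neg hq1 hs' hψ hs.1
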